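/- arXiv:2505.24728 — 2 statements merged into one kernel-verified Lean document; each statement's English description precedes it below -/
import Mathlib

section
/- In the setting of the previous statement, choosing η = 1/(2L) and ρ = 1/√R gives (1/R) Σ_{r=0}^{R-1} ‖∇F(w_r)‖² ≤ (8L(F(w₀) - F*))/R + 4L²/R, so the average squared gradient norm decays at rate O(1/R). -/
set_option maxHeartbeats 1000000

open InnerProductSpace

lemma sam_descent {d : ℕ} {F : EuclideanSpace ℝ (Fin d) → ℝ} {L : ℝ} (hL : 0 < L)
    (hdiff : Differentiable ℝ F)
    (hLip : ∀ w v : EuclideanSpace ℝ (Fin d), ‖gradient F w - gradient F v‖ ≤ L * ‖w - v‖)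
    (x v : EuclideanSpace ℝ (Fin d)) :
    F (x + v) ≤ F x + inner ℝ (gradient F x) v + L / 2 * ‖v‖ ^ 2 := by
  set c : ℝ := inner ℝ (gradient F x) v with hc
  set φ : ℝ → ℝ := fun t => F (x + t • v) - t * c - L / 2 * ‖v‖ ^ 2 * t ^ 2 with hφ
  have hline : ∀ t : ℝ, HasDerivAt (fun s : ℝ => x + s • v) v t := by
    intro t
    simpa using ((hasDerivAt_id t).smul_const v).const_add x
  have hFd : ∀ t : ℝ, HasDerivAt (fun s : ℝ => F (x + s • v))
      (inner ℝ (gradient F (x + t • v)) v : ℝ) t := by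
    intro t
    have hg := (hdiff (x + t • v)).hasGradientAt
    have hf : HasFDerivAt F (toDual ℝ _ (gradient F (x + t • v))) (x + t • v) :=
      hasGradientAt_iff_hasFDerivAt.mp hg
    have := hf.comp_hasDerivAt t (hline t)
    exact this
  have hφd : ∀ t : ℝ, HasDerivAt φ
      ((inner ℝ (gradient F (x + t • v)) v : ℝ) - c - L / 2 * ‖v‖ ^ 2 * (2 * t)) t := by
    intro t
    have h1 : HasDerivAt (fun t : ℝ => t * c) c t := by
      simpa using (hasDerivAt_id t).mul_const c
    have h2 : HasDerivAt (fun t : ℝ => L / 2 * ‖v‖ ^ 2 * t ^ 2)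
        (L / 2 * ‖v‖ ^ 2 * (2 * t)) t := by
      have := (hasDerivAt_pow 2 t).const_mul (L / 2 * ‖v‖ ^ 2)
      simpa [mul_comm, mul_assoc] using this
    exact ((hFd t).sub h1).sub h2
  have hanti : AntitoneOn φ (Set.Icc (0:ℝ) 1) := by
    apply antitoneOn_of_deriv_nonpos (convex_Icc 0 1)
    · exact fun t _ => ((hφd t).continuousAt).continuousWithinAt
    · exact fun t _ => ((hφd t).differentiableAt).differentiableWithinAt
    · intro t ht
      rw [interior_Icc] at ht
      rw [(hφd t).deriv]
      have hip : (inner ℝ (gradient F (x + t • v)) v : ℝ) - c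
          = inner ℝ (gradient F (x + t • v) - gradient F x) v := by
        rw [hc, inner_sub_left]
      have hbd : (inner ℝ (gradient F (x + t • v) - gradient F x) v : ℝ)
          ≤ ‖gradient F (x + t • v) - gradient F x‖ * ‖v‖ :=
        real_inner_le_norm _ _
      have hlip2 : ‖gradient F (x + t • v) - gradient F x‖ ≤ L * (t * ‖v‖) := by
        have := hLip (x + t • v) x
        have hn : ‖(x + t • v) - x‖ = t * ‖v‖ := by
          simp [norm_smul, abs_of_pos ht.1]
        rw [hn] at this; exact this
      have hv : (0:ℝ) ≤ ‖v‖ := norm_nonneg v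
      nlinarith [ht.1.le, norm_nonneg (gradient F (x + t • v) - gradient F x)]
  have h01 : φ 1 ≤ φ 0 := hanti (by norm_num) (by norm_num) (by norm_num)
  simp only [hφ, one_smul, zero_smul, add_zero, one_mul, one_pow, zero_mul, sub_zero,
    mul_zero, zero_pow] at h01
  linarith [h01]

theorem sam_convergence_rate (d : ℕ) (F : EuclideanSpace ℝ (Fin d) → ℝ) (L ρ η Fstar : ℝ)
    (hL : 0 < L)
    (hdiff : Differentiable ℝ F)
    (hLip : ∀ w v : EuclideanSpace ℝ (Fin d), ‖gradient F w - gradient F v‖ ≤ L * ‖w - v‖)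
    (hbd : ∀ v, Fstar ≤ F v)
    (R : ℕ) (hR : 1 ≤ R)
    (hη : η = 1 / (2 * L)) (hρ : ρ = 1 / Real.sqrt R)
    (w : ℕ → EuclideanSpace ℝ (Fin d))
    (hgrad : ∀ r, gradient F (w r) ≠ 0)
    (hiter : ∀ r, w (r + 1) =
      w r - η • gradient F (w r + (ρ / ‖gradient F (w r)‖) • gradient F (w r))) :
    (1 / (R : ℝ)) * ∑ r ∈ Finset.range R, ‖gradient F (w r)‖ ^ 2 ≤
      8 * L * (F (w 0) - Fstar) / R + 4 * L ^ 2 / R := by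
  have hRpos : (0:ℝ) < R := by exact_mod_cast hR
  have hsq : Real.sqrt R > 0 := Real.sqrt_pos.mpr hRpos
  have hρpos : 0 < ρ := by rw [hρ]; positivity
  have hρ2 : ρ ^ 2 = 1 / R := by
    rw [hρ, div_pow, one_pow, Real.sq_sqrt hRpos.le]
  have hηpos : 0 < η := by rw [hη]; positivity
  -- per-step inequality
  have hstep : ∀ r, ‖gradient F (w r)‖ ^ 2 ≤
      4 * L * (F (w r) - F (w (r + 1))) + L ^ 2 * ρ ^ 2 := by
    intro r
    set g := gradient F (w r) with hg
    set p := w r + (ρ / ‖g‖) • g with hp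
    set gt := gradient F p with hgt
    have hnormg : (0:ℝ) < ‖g‖ := norm_pos_iff.mpr (hgrad r)
    have hdescent := sam_descent hL hdiff hLip (w r) (-(η • gt))
    have hwr1 : w (r + 1) = w r + -(η • gt) := by
      rw [hiter r, sub_eq_add_neg]
    rw [← hwr1] at hdescent
    have hinner : (inner ℝ g (-(η • gt)) : ℝ) = -(η * inner ℝ g gt) := by
      rw [inner_neg_right, real_inner_smul_right]
    have hnorm2 : ‖-(η • gt)‖ ^ 2 = η ^ 2 * ‖gt‖ ^ 2 := by
      rw [norm_neg, norm_smul, mul_pow, Real.norm_eq_abs, sq_abs]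
    rw [hinner, hnorm2] at hdescent
    -- bound ‖g - gt‖ ≤ L * ρ
    have hdist : ‖w r - p‖ = ρ := by
      rw [hp]
      have : w r - (w r + (ρ / ‖g‖) • g) = -((ρ / ‖g‖) • g) := by abel
      rw [this, norm_neg, norm_smul, Real.norm_eq_abs, abs_of_pos (by positivity)]
      field_simp
    have hD : ‖g - gt‖ ≤ L * ρ := by
      have := hLip (w r) p
      rw [hdist] at this; exact this
    have hpolar : ‖g - gt‖ ^ 2 = ‖g‖ ^ 2 - 2 * inner ℝ g gt + ‖gt‖ ^ 2 :=
      norm_sub_sq_real g gt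
    have hD2 : ‖g - gt‖ ^ 2 ≤ L ^ 2 * ρ ^ 2 := by
      nlinarith [norm_nonneg (g - gt)]
    have hLη2 : L / 2 * η ^ 2 = η / 4 := by rw [hη]; field_simp; ring
    have h4L : 4 * L * (η / 2) = 1 := by rw [hη]; field_simp; ring
    -- pass to scalars
    set a := ‖g‖ with ha
    set b := ‖gt‖ with hb2
    set Dn := ‖g - gt‖ with hDn
    set I : ℝ := inner ℝ g gt with hI0
    have hb0 : (0:ℝ) ≤ b := norm_nonneg _
    have hdescent' : F (w (r + 1)) ≤ F (w r) + -(η * I) + η / 4 * b ^ 2 := by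
      calc F (w (r + 1)) ≤ F (w r) + -(η * I) + L / 2 * (η ^ 2 * b ^ 2) := hdescent
        _ = F (w r) + -(η * I) + η / 4 * b ^ 2 := by rw [← mul_assoc, hLη2]
    have hIeq : I = (a ^ 2 + b ^ 2 - Dn ^ 2) / 2 := by linarith [hpolar]
    have hI : η * I = η * ((a ^ 2 + b ^ 2 - Dn ^ 2) / 2) := by rw [hIeq]
    have h1 : η * Dn ^ 2 ≤ η * (L ^ 2 * ρ ^ 2) := mul_le_mul_of_nonneg_left hD2 hηpos.le
    have h2 : (0:ℝ) ≤ η * b ^ 2 := mul_nonneg hηpos.le (sq_nonneg b)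
    have key : F (w (r + 1)) ≤ F (w r) - η / 2 * a ^ 2 + η / 2 * (L ^ 2 * ρ ^ 2) := by
      linarith [hdescent', hI, h1, h2]
    have hmul := mul_le_mul_of_nonneg_left key (by positivity : (0:ℝ) ≤ 4 * L)
    nlinarith [hmul, h4L, hL]
  -- sum up
  have hsum : ∑ r ∈ Finset.range R, ‖gradient F (w r)‖ ^ 2 ≤
      4 * L * (F (w 0) - F (w R)) + R * (L ^ 2 * ρ ^ 2) := by
    calc ∑ r ∈ Finset.range R, ‖gradient F (w r)‖ ^ 2
        ≤ ∑ r ∈ Finset.range R, (4 * L * (F (w r) - F (w (r + 1))) + L ^ 2 * ρ ^ 2) :=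
          Finset.sum_le_sum fun r _ => hstep r
      _ = 4 * L * (F (w 0) - F (w R)) + R * (L ^ 2 * ρ ^ 2) := by
          rw [Finset.sum_add_distrib, ← Finset.mul_sum, Finset.sum_range_sub' (fun i => F (w i)),
            Finset.sum_const, Finset.card_range, nsmul_eq_mul]
  have hFbd : Fstar ≤ F (w R) := hbd _
  have hF0 : Fstar ≤ F (w 0) := hbd _
  have hRρ : (R:ℝ) * (L ^ 2 * ρ ^ 2) = L ^ 2 := by
    rw [hρ2]; field_simp
  rw [hRρ] at hsum
  have h1 : ∑ r ∈ Finset.range R, ‖gradient F (w r)‖ ^ 2 ≤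
      4 * L * (F (w 0) - Fstar) + L ^ 2 := by nlinarith
  have h2 : (1 / (R : ℝ)) * ∑ r ∈ Finset.range R, ‖gradient F (w r)‖ ^ 2 ≤
      (1 / (R : ℝ)) * (4 * L * (F (w 0) - Fstar) + L ^ 2) := by
    apply mul_le_mul_of_nonneg_left h1 (by positivity)
  refine h2.trans ?_
  have hΔ : 0 ≤ F (w 0) - Fstar := by linarith
  rw [div_add_div _ _ (ne_of_gt hRpos) (ne_of_gt hRpos), one_div, inv_mul_eq_div,
    div_le_div_iff₀ hRpos (by positivity)]
  nlinarith [mul_nonneg (mul_nonneg hL.le hΔ) (mul_pos hRpos hRpos).le,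
    mul_nonneg (sq_nonneg L) (mul_pos hRpos hRpos).le]
end

section
/- Let F be L-smooth and consider one SAM step w⁺ = w - η∇F(ŵ) with ŵ = w + ρ∇F(w)/‖∇F(w)‖, ∇F(w) ≠ 0, η ≤ 1/(2L). Then F(w⁺) ≤ F(w) - (η/4)‖∇F(w)‖² + (η L²ρ²)/2 + (L η²/2 - η/4)·0, i.e., F(w⁺) ≤ F(w) - (η/4)‖∇F(w)‖² + η L² ρ². -/
open InnerProductSpace Metric

lemma descent_aux (d : ℕ) (F : EuclideanSpace ℝ (Fin d) → ℝ) (L : ℝ) (hL : 0 ≤ L)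
    (hdiff : Differentiable ℝ F)
    (hLip : ∀ w v : EuclideanSpace ℝ (Fin d), ‖gradient F w - gradient F v‖ ≤ L * ‖w - v‖)
    (x y : EuclideanSpace ℝ (Fin d)) :
    F y ≤ F x + inner ℝ (gradient F x) (y - x) + L * ‖y - x‖ ^ 2 := by
  set g₀ := gradient F x with hg₀
  set G : EuclideanSpace ℝ (Fin d) → ℝ := fun z => F z - toDual ℝ _ g₀ z with hG
  set s := closedBall x ‖y - x‖ with hs
  have key : ‖G y - G x‖ ≤ (L * ‖y - x‖) * ‖y - x‖ := by
    apply (convex_closedBall x ‖y - x‖).norm_image_sub_le_of_norm_hasFDerivWithin_le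
      (f' := fun z => fderiv ℝ F z - (toDual ℝ _ g₀ : EuclideanSpace ℝ (Fin d) →L[ℝ] ℝ))
    · intro z _
      exact (((hdiff z).hasFDerivAt.sub
        ((toDual ℝ _ g₀ : EuclideanSpace ℝ (Fin d) →L[ℝ] ℝ).hasFDerivAt)).hasFDerivWithinAt)
    · intro z hz
      have h1 : fderiv ℝ F z - (toDual ℝ _ g₀ : EuclideanSpace ℝ (Fin d) →L[ℝ] ℝ)
          = toDual ℝ _ (gradient F z - g₀) := by
        rw [map_sub]
        congr 1
        simp [gradient]
      rw [h1]
      have h2 : ‖(toDual ℝ (EuclideanSpace ℝ (Fin d)) (gradient F z - g₀) :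
          EuclideanSpace ℝ (Fin d) →L[ℝ] ℝ)‖ = ‖gradient F z - g₀‖ :=
        (toDual ℝ _).norm_map _
      rw [h2]
      calc ‖gradient F z - g₀‖ ≤ L * ‖z - x‖ := hLip z x
        _ ≤ L * ‖y - x‖ := by
            apply mul_le_mul_of_nonneg_left _ hL
            simpa [dist_eq_norm] using hz
    · simp [mem_closedBall, dist_self, norm_nonneg]
    · simp [mem_closedBall, dist_eq_norm]
  have hGy : G y - G x = F y - F x - inner ℝ g₀ (y - x) := by
    simp only [hG, toDual_apply_apply, inner_sub_right]
    ring
  rw [hGy] at key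
  rw [Real.norm_eq_abs] at key
  have := (abs_le.mp key).2
  nlinarith [this]

theorem sam_one_step_progress (d : ℕ) (F : EuclideanSpace ℝ (Fin d) → ℝ) (L ρ η : ℝ)
    (hL : 0 < L) (hρ : 0 < ρ) (hη : 0 < η) (hηL : η ≤ 1 / (2 * L))
    (hdiff : Differentiable ℝ F)
    (hLip : ∀ w v : EuclideanSpace ℝ (Fin d), ‖gradient F w - gradient F v‖ ≤ L * ‖w - v‖)
    (w : EuclideanSpace ℝ (Fin d)) (hw : gradient F w ≠ 0) :
    F (w - η • gradient F (w + (ρ / ‖gradient F w‖) • gradient F w)) ≤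
      F w - (η / 4) * ‖gradient F w‖ ^ 2 + η * L ^ 2 * ρ ^ 2 := by
  set g := gradient F w with hg
  set wh := w + (ρ / ‖g‖) • g with hwh
  set gh := gradient F wh with hgh
  set y := w - η • gh with hy
  have hgn : ‖g‖ ≠ 0 := norm_ne_zero_iff.mpr hw
  -- distance from wh to w is ρ
  have hdist : ‖wh - w‖ = ρ := by
    have h0 : wh - w = (ρ / ‖g‖) • g := by rw [hwh]; abel
    rw [h0, norm_smul, Real.norm_eq_abs, abs_div, abs_of_pos hρ, abs_norm,
      div_mul_cancel₀ _ hgn]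
  have herr : ‖gh - g‖ ≤ L * ρ := by
    calc ‖gh - g‖ ≤ L * ‖wh - w‖ := hLip wh w
      _ = L * ρ := by rw [hdist]
  have hdesc := descent_aux d F L hL.le hdiff hLip w y
  have hyx : y - w = -(η • gh) := by rw [hy]; abel
  have hinner : (inner ℝ g (y - w) : ℝ) = -(η * inner ℝ g gh) := by
    rw [hyx, inner_neg_right, real_inner_smul_right]
  have hnorm : ‖y - w‖ ^ 2 = η ^ 2 * ‖gh‖ ^ 2 := by
    rw [hyx, norm_neg, norm_smul, mul_pow, Real.norm_eq_abs, sq_abs]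
  rw [hinner, hnorm] at hdesc
  -- scalar inequalities
  have hexp : ‖gh - g‖ ^ 2 = ‖gh‖ ^ 2 - 2 * inner ℝ g gh + ‖g‖ ^ 2 := by
    rw [norm_sub_sq_real, real_inner_comm]
  have hLη : L * η ≤ 1 / 2 := by
    rw [le_div_iff₀ (by positivity)] at hηL
    nlinarith
  have herr2 : ‖gh - g‖ ^ 2 ≤ L ^ 2 * ρ ^ 2 := by
    have h5 : ‖gh - g‖ ^ 2 ≤ (L * ρ) ^ 2 :=
      pow_le_pow_left₀ (norm_nonneg _) herr 2
    linarith [h5, (by ring : (L * ρ) ^ 2 = L ^ 2 * ρ ^ 2)]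
  have hη2 : L * (η ^ 2 * ‖gh‖ ^ 2) ≤ (η / 2) * ‖gh‖ ^ 2 := by
    have e1 : L * (η ^ 2 * ‖gh‖ ^ 2) = (L * η) * (η * ‖gh‖ ^ 2) := by ring
    have e2 := mul_le_mul_of_nonneg_right hLη (mul_nonneg hη.le (sq_nonneg ‖gh‖))
    rw [e1]
    linarith
  have hexp' : (η / 2) * ‖gh - g‖ ^ 2
      = (η / 2) * ‖gh‖ ^ 2 - η * inner ℝ g gh + (η / 2) * ‖g‖ ^ 2 := by
    rw [hexp]; ring
  have h3 : (η / 2) * ‖gh - g‖ ^ 2 ≤ (η / 2) * (L ^ 2 * ρ ^ 2) :=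
    mul_le_mul_of_nonneg_left herr2 (by positivity)
  have h4 : 0 ≤ η * ‖g‖ ^ 2 := mul_nonneg hη.le (sq_nonneg _)
  have h6 : 0 ≤ η * (L ^ 2 * ρ ^ 2) := by positivity
  linarith [hdesc, hexp', h3, hη2, h4, h6]
end
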